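/- With the setup below, for every p ≥ 1 and every g ∈ G₁: |c^p| − 4K ≤ d^π_{g⁻¹𝓔}(o, g⁻¹c^p g.o) ≤ |c^p| + 4K; equivalently, π_{g⁻¹𝓔}(o) ⊆ B̄_{2K}(g⁻¹.o) and π_{g⁻¹𝓔}(g⁻¹c^p g.o) ⊆ B̄_{2K}(g⁻¹c^p.o). -/

import Mathlib

open Metric Set Filter Pointwise

namespace ACcogrowth

variable {X : Type*} [MetricSpace X]

/-- A map `γ` is a geodesic when restricted to the interval `[a,b]`. -/
def IsGeodesicOn (γ : ℝ → X) (a b : ℝ) : Prop :=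
  ∀ s ∈ Set.Icc a b, ∀ t ∈ Set.Icc a b, dist (γ s) (γ t) = |s - t|

/-- `X` is a geodesic metric space: any two points are joined by a geodesic. -/
def GeodesicSpace (X : Type*) [MetricSpace X] : Prop :=
  ∀ x y : X, ∃ γ : ℝ → X, IsGeodesicOn γ 0 (dist x y) ∧ γ 0 = x ∧ γ (dist x y) = y

/-- The nearest-point projection of `x` to `Y`. -/
def proj (Y : Set X) (x : X) : Set X := {y ∈ Y | dist x y = Metric.infDist x Y}

/-- The projection of a set `Z` to `Y`. -/
def projSet (Y Z : Set X) : Set X := ⋃ z ∈ Z, proj Y z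

/-- The projection distance `d^π_Y(Z,Z')`. -/
noncomputable def dpi (Y Z Z' : Set X) : ℝ := Metric.diam (projSet Y Z ∪ projSet Y Z')

/-- `Y` is `C`-strongly contracting. -/
def StronglyContractingWith (C : ℝ) (Y : Set X) : Prop :=
  0 ≤ C ∧ ∀ x x' : X, dist x x' ≤ Metric.infDist x Y →
    Metric.diam (proj Y x ∪ proj Y x') ≤ C

/-- `Y` is strongly contracting. -/
def StronglyContracting (Y : Set X) : Prop := ∃ C, StronglyContractingWith C Y

variable {G : Type*} [Group G] [MulAction G X]

/-- The action of `G` on `X` is (metrically) proper. -/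
def ProperAction (G : Type*) [Group G] [MulAction G X] (o : X) : Prop :=
  ∀ (x : X) (r : ℝ), {g : G | dist x (g • o) ≤ r}.Finite

/-- The orbit of the basepoint under the cyclic group generated by `c`. -/
def cOrbit (c : G) (o : X) : Set X := Set.range fun i : ℤ => c ^ i • o

/-- `c` is a strongly contracting element for the action. -/
def IsStronglyContractingElement (c : G) (o : X) : Prop :=
  ¬ IsOfFinOrder c ∧ StronglyContracting (cOrbit c o)

/-- The elementary closure `E(c)`: elements moving `⟨c⟩.o` a finite Hausdorff distance. -/
def Ec (c : G) (o : X) : Set G :=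
  {g : G | EMetric.hausdorffEdist (g • cOrbit c o) (cOrbit c o) ≠ ⊤}

/-- The axis `𝓔 = E(c).o`. -/
def Esub (c : G) (o : X) : Set X := (· • o) '' Ec c o

/-- The family of distinct `G`-translates of `𝓔`. -/
def translates (c : G) (o : X) : Set (Set X) := Set.range fun g : G => g • Esub c o

/-- Axiom (P0) with constant `θ` for the family of translates. -/
def AxiomP0 (c : G) (o : X) (θ : ℝ) : Prop :=
  ∀ 𝓨 ∈ translates c o, ∀ 𝓧 ∈ translates c o, 𝓧 ≠ 𝓨 → dpi 𝓨 𝓧 𝓧 ≤ θ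

/-- Axiom (P1) with constant `θ` for the family of translates. -/
def AxiomP1 (c : G) (o : X) (θ : ℝ) : Prop :=
  ∀ 𝓧 ∈ translates c o, ∀ 𝓨 ∈ translates c o, ∀ 𝓩 ∈ translates c o,
    𝓧 ≠ 𝓨 → 𝓨 ≠ 𝓩 → 𝓧 ≠ 𝓩 → dpi 𝓨 𝓧 𝓩 > θ → dpi 𝓧 𝓨 𝓩 ≤ θ

/-- `C'` is a bounded-geodesic-image constant for all translates of `𝓔`. -/
def BGIconst (c : G) (o : X) (C' : ℝ) : Prop :=
  ∀ g : G, ∀ γ : ℝ → X, ∀ a b : ℝ, IsGeodesicOn γ a b →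
    (∀ t ∈ Set.Icc a b, C' ≤ Metric.infDist (γ t) (g • Esub c o)) →
    Metric.diam (projSet (g • Esub c o) (γ '' Set.Icc a b)) ≤ C'

/-- The set `G₁`. -/
def Gone (c : G) (o : X) (K : ℝ) : Set G :=
  {g : G | dpi (Esub c o) {o} {g • o} ≤ 2 * K ∧
    dpi (g • Esub c o) {o} {g • o} ≤ 2 * K ∧ g • Esub c o ≠ Esub c o}

/-- The set `G_{2,p}` of conjugates of `c^p` by elements of `G₁`. -/
def Gtwo (c : G) (o : X) (K : ℝ) (p : ℕ) : Set G :=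
  (fun g : G => g⁻¹ * c ^ p * g) '' Gone c o K

/-- A subset `S` of `G` is `s`-separated (with respect to the orbit pseudo-metric). -/
def SeparatedSet (o : X) (s : ℝ) (S : Set G) : Prop :=
  ∀ x ∈ S, ∀ y ∈ S, x ≠ y → s ≤ dist (x • o) (y • o)

/-- There is a geodesic from `x` to `y` passing within distance `D` of `z`. -/
def GeodesicPassesNear (x y z : X) (D : ℝ) : Prop :=
  ∃ γ : ℝ → X, IsGeodesicOn γ 0 (dist x y) ∧ γ 0 = x ∧ γ (dist x y) = y ∧
    ∃ t ∈ Set.Icc 0 (dist x y), dist (γ t) z ≤ D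

/-- The shadowed subset `G'_{4,p,D}` of a given set `G₃`. -/
def Gfour' (c : G) (o : X) (G₃ : Set G) (p : ℕ) (D : ℝ) : Set G :=
  {x ∈ G₃ | ∃ y ∈ G₃, y ≠ x ∧ GeodesicPassesNear o (x • o) ((y * c ^ (2 * p)) • o) D}

/-- The growth rate of a subset `H ⊆ G` with respect to the induced pseudo-metric. -/
noncomputable def growthRate (o : X) (H : Set G) : ℝ :=
  Filter.limsup
    (fun r : ℝ => Real.log (({h ∈ H | dist o (h • o) ≤ r}).ncard) / r) Filter.atTop

/-- The growth rate of a subset `B ⊆ X`. -/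
noncomputable def growthRateX (o : X) (B : Set X) : ℝ :=
  Filter.limsup
    (fun r : ℝ => Real.log (({b ∈ B | dist o b ≤ r}).ncard) / r) Filter.atTop

/-- `H` is divergent: its Poincaré series diverges at `s = δ_H`. -/
def Divergent (o : X) (H : Set G) : Prop :=
  ¬ Summable fun h : H => Real.exp (-(growthRate o H) * dist o ((h : G) • o))

/-- `G` has purely exponential growth with rate `δ`, shell width `Δ` and constant `A`. -/
def PurelyExponentialWith (G : Type*) [Group G] [MulAction G X] (o : X)
    (δ Δ A : ℝ) : Prop :=
  0 < δ ∧ 0 < Δ ∧ 1 ≤ A ∧ ∀ r : ℝ, 0 ≤ r →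
    Real.exp (δ * r) / A ≤
        (({g : G | r < dist o (g • o) ∧ dist o (g • o) ≤ r + Δ}).ncard : ℝ) ∧
    (({g : G | r < dist o (g • o) ∧ dist o (g • o) ≤ r + Δ}).ncard : ℝ) ≤
        A * Real.exp (δ * r)

/-- `G` has purely exponential growth. -/
def PurelyExponential (G : Type*) [Group G] [MulAction G X] (o : X) : Prop :=
  ∃ δ Δ A : ℝ, PurelyExponentialWith G o δ Δ A

/-- The tree's-worth map: `(g₁, …, g_k) ↦ (g₁ c g₂ c ⋯ g_k c).o`. -/
def treeMap (o : X) (c : G) (l : List G) : X := (l.map fun g => g * c).prod • o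


/-
Since `o ∈ 𝓔`, the bound `d^π_𝓔(o, g.o) ≤ 2K` puts `π_𝓔(g.o)` inside `B̄_{2K}(o)`.
Translating by `g⁻¹`, and by `g⁻¹c^p` (which maps `𝓔` to `g⁻¹𝓔` because `c^p ∈ E(c)`),
gives the two ball containments; two nonempty sets lying in `2K`-balls around points at
distance `|c^p|` have a union of diameter `|c^p| ± 4K`. The projections are nonempty because
the orbit meets every ball in finitely many points.
-/

section Projection

variable {Y : Set X} {x x' : X}

lemma projSet_singleton (Y : Set X) (x : X) : projSet Y {x} = proj Y x := by
  simp [projSet]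

lemma dpi_singleton (Y : Set X) (x x' : X) : dpi Y {x} {x'} = diam (proj Y x ∪ proj Y x') := by
  rw [dpi, projSet_singleton, projSet_singleton]

lemma proj_subset_closedBall (Y : Set X) (x : X) : proj Y x ⊆ closedBall x (infDist x Y) :=
  fun _ hy => by rw [mem_closedBall, dist_comm]; exact hy.2.le

lemma self_mem_proj (hx : x ∈ Y) : x ∈ proj Y x :=
  ⟨hx, by rw [dist_self, infDist_zero_of_mem hx]⟩

lemma proj_subset_closedBall_dpi (hx : x ∈ Y) : proj Y x' ⊆ closedBall x (dpi Y {x} {x'}) := by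
  intro y hy
  have hbdd : Bornology.IsBounded (proj Y x ∪ proj Y x') :=
    (isBounded_closedBall.subset (proj_subset_closedBall Y x)).union
      (isBounded_closedBall.subset (proj_subset_closedBall Y x'))
  rw [mem_closedBall, dpi_singleton]
  exact dist_le_diam_of_mem hbdd (Or.inr hy) (Or.inl (self_mem_proj hx))

lemma proj_nonempty_of_finite_inter_closedBall (hY : Y.Nonempty)
    (hfin : ∀ r, (Y ∩ closedBall x r).Finite) : (proj Y x).Nonempty := by
  obtain ⟨y₀, hy₀⟩ := hY
  have hy₀' : y₀ ∈ Y ∩ closedBall x (dist x y₀) := ⟨hy₀, by rw [mem_closedBall, dist_comm]⟩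
  obtain ⟨y, ⟨hy, -⟩, hmin⟩ :=
    exists_min_image _ (dist x) (hfin (dist x y₀)) ⟨y₀, hy₀'⟩
  refine ⟨y, hy, le_antisymm ((le_infDist ⟨y₀, hy₀⟩).2 fun z hz => ?_)
    (infDist_le_dist_of_mem hy)⟩
  by_cases hz' : dist x z ≤ dist x y₀
  · exact hmin z ⟨hz, by rwa [mem_closedBall, dist_comm]⟩
  · exact (hmin y₀ hy₀').trans (le_of_not_ge hz')

lemma proj_image {Z : Type*} [MetricSpace Z] {Φ : X → Z} (hΦ : Isometry Φ) (Y : Set X)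
    (x : X) : proj (Φ '' Y) (Φ x) = Φ '' proj Y x := by
  ext z
  constructor
  · rintro ⟨⟨y, hy, rfl⟩, hd⟩
    exact ⟨y, ⟨hy, by rwa [hΦ.dist_eq, infDist_image hΦ] at hd⟩, rfl⟩
  · rintro ⟨y, ⟨hy, hd⟩, rfl⟩
    exact ⟨mem_image_of_mem Φ hy, by rwa [hΦ.dist_eq, infDist_image hΦ]⟩

lemma proj_smul [IsIsometricSMul G X] (g : G) (Y : Set X) (x : X) :
    proj (g • Y) (g • x) = g • proj Y x := by
  simpa only [image_smul] using proj_image (isometry_smul X g) Y x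

end Projection

lemma abs_diam_union_sub_dist_le {A B : Set X} {a b : X} {r : ℝ} (hA : A.Nonempty)
    (hB : B.Nonempty) (hAa : A ⊆ closedBall a r) (hBb : B ⊆ closedBall b r) :
    |diam (A ∪ B) - dist a b| ≤ 2 * r := by
  obtain ⟨u, hu⟩ := hA
  obtain ⟨v, hv⟩ := hB
  have hr : 0 ≤ r := (nonempty_closedBall (x := a)).1 ⟨u, hAa hu⟩
  have hbdd : Bornology.IsBounded (A ∪ B) :=
    (isBounded_closedBall.subset hAa).union (isBounded_closedBall.subset hBb)
  rw [abs_sub_le_iff]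
  constructor
  · have hnear : ∀ y ∈ A ∪ B, dist y a ≤ r ∨ dist y b ≤ r := fun y hy =>
      hy.imp (fun h => mem_closedBall.1 (hAa h)) (fun h => mem_closedBall.1 (hBb h))
    rw [sub_le_iff_le_add']
    refine diam_le_of_forall_dist_le (by linarith [dist_nonneg (x := a) (y := b)])
      fun y hy z hz => ?_
    rcases hnear y hy with hya | hyb <;> rcases hnear z hz with hza | hzb <;>
      linarith [dist_triangle_right y z a, dist_triangle_right y z b, dist_triangle4 y a b z,
        dist_triangle4 y b a z, dist_comm a b, dist_comm a z, dist_comm b z,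
        dist_nonneg (x := a) (y := b)]
  · have hua := mem_closedBall'.1 (hAa hu)
    have hvb := mem_closedBall.1 (hBb hv)
    linarith [dist_le_diam_of_mem hbdd (Or.inl hu) (Or.inr hv), dist_triangle4 a u v b]

section ElementaryClosure

lemma zpow_smul_cOrbit {G X : Type*} [Group G] [MulAction G X] (c : G) (o : X) (n : ℤ) :
    c ^ n • cOrbit c o = cOrbit c o := by
  rw [cOrbit, smul_set_range]
  simp_rw [smul_smul, ← zpow_add]
  exact (Equiv.addLeft n).surjective.range_comp fun i => c ^ i • o

variable (c : G) (o : X)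

lemma one_mem_Ec : (1 : G) ∈ Ec c o := by
  show hausdorffEDist ((1 : G) • cOrbit c o) (cOrbit c o) ≠ ⊤
  rw [one_smul, hausdorffEDist_self]
  exact ENNReal.zero_ne_top

lemma mem_Esub_self : o ∈ Esub c o := ⟨1, one_mem_Ec c o, one_smul G o⟩

lemma proj_Esub_nonempty (hproper : ProperAction G o) (x : X) : (proj (Esub c o) x).Nonempty :=
  proj_nonempty_of_finite_inter_closedBall ⟨o, mem_Esub_self c o⟩ fun r =>
    ((hproper x r).image (· • o)).subset <| by
      rintro _ ⟨⟨g, -, rfl⟩, hg⟩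
      exact ⟨g, by rwa [mem_closedBall, dist_comm] at hg, rfl⟩

variable [IsIsometricSMul G X]

lemma mul_mem_Ec_iff {a e : G} (ha : a • cOrbit c o = cOrbit c o) :
    a * e ∈ Ec c o ↔ e ∈ Ec c o := by
  show hausdorffEDist ((a * e) • cOrbit c o) (cOrbit c o) ≠ ⊤ ↔
    hausdorffEDist (e • cOrbit c o) (cOrbit c o) ≠ ⊤
  rw [← hausdorffEDist_image (s := e • cOrbit c o) (t := cOrbit c o) (isometry_smul X a),
    image_smul, image_smul, ha, mul_smul]

lemma smul_Esub_of_smul_cOrbit {a : G} (ha : a • cOrbit c o = cOrbit c o) :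
    a • Esub c o = Esub c o := by
  have hEc : (a * ·) '' Ec c o = Ec c o := by
    rw [image_mul_left]
    ext e
    exact mul_mem_Ec_iff c o (inv_smul_eq_iff.2 ha.symm)
  conv_rhs => rw [Esub, ← hEc]
  rw [Esub, ← image_smul, image_image, image_image]
  simp only [mul_smul]

end ElementaryClosure

theorem projection_distance_conjugate_general
    {G : Type*} [Group G] {X : Type*} [MetricSpace X]
    [MulAction G X] [IsIsometricSMul G X] (o : X)
    (hproper : ProperAction G o)
    (c : G) (K : ℝ) :
    ∀ p : ℕ, 1 ≤ p → ∀ g ∈ Gone c o K,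
      (dist o (c ^ p • o) - 4 * K ≤
          dpi (g⁻¹ • Esub c o) {o} {(g⁻¹ * c ^ p * g) • o} ∧
        dpi (g⁻¹ • Esub c o) {o} {(g⁻¹ * c ^ p * g) • o} ≤
          dist o (c ^ p • o) + 4 * K) ∧
      proj (g⁻¹ • Esub c o) o ⊆ Metric.closedBall (g⁻¹ • o) (2 * K) ∧
      proj (g⁻¹ • Esub c o) ((g⁻¹ * c ^ p * g) • o) ⊆
        Metric.closedBall ((g⁻¹ * c ^ p) • o) (2 * K) := by
  intro p _ g hg
  set P := proj (Esub c o) (g • o)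
  have hP : P ⊆ closedBall o (2 * K) :=
    (proj_subset_closedBall_dpi (mem_Esub_self c o)).trans (closedBall_subset_closedBall hg.1)
  have hPne : P.Nonempty := proj_Esub_nonempty c o hproper (g • o)
  have hcp : c ^ p • Esub c o = Esub c o :=
    smul_Esub_of_smul_cOrbit c o (by simpa using zpow_smul_cOrbit c o p)
  have h₁ : proj (g⁻¹ • Esub c o) o = g⁻¹ • P := by
    simpa using proj_smul g⁻¹ (Esub c o) (g • o)
  have h₂ : proj (g⁻¹ • Esub c o) ((g⁻¹ * c ^ p * g) • o) = (g⁻¹ * c ^ p) • P := by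
    rw [← proj_smul, mul_smul (g⁻¹ * c ^ p) g, mul_smul g⁻¹ (c ^ p) (Esub c o), hcp]
  have hB₁ : g⁻¹ • P ⊆ closedBall (g⁻¹ • o) (2 * K) := by
    rw [← Metric.smul_closedBall]
    exact smul_set_mono hP
  have hB₂ : (g⁻¹ * c ^ p) • P ⊆ closedBall ((g⁻¹ * c ^ p) • o) (2 * K) := by
    rw [← Metric.smul_closedBall]
    exact smul_set_mono hP
  have hdiam := abs_diam_union_sub_dist_le (hPne.smul_set (a := g⁻¹))
    (hPne.smul_set (a := g⁻¹ * c ^ p)) hB₁ hB₂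
  have hdist : dist (g⁻¹ • o) ((g⁻¹ * c ^ p) • o) = dist o (c ^ p • o) := by
    rw [mul_smul, dist_smul]
  rw [hdist] at hdiam
  rw [dpi_singleton, h₁, h₂]
  exact ⟨by constructor <;> linarith [abs_le.1 hdiam], hB₁, hB₂⟩

/-- **Lemma.** For every `p ≥ 1` and every `g ∈ G₁`:
`|c^p| − 4K ≤ d^π_{g⁻¹𝓔}(o, g⁻¹c^p g.o) ≤ |c^p| + 4K`; equivalently
`π_{g⁻¹𝓔}(o) ⊆ B̄_{2K}(g⁻¹.o)` and `π_{g⁻¹𝓔}(g⁻¹c^p g.o) ⊆ B̄_{2K}(g⁻¹c^p.o)`. -/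
theorem projection_distance_conjugate
    {G : Type*} [Group G] {X : Type*} [MetricSpace X]
    [MulAction G X] [IsIsometricSMul G X] (o : X)
    (hgeo : GeodesicSpace X)
    (hproper : ProperAction G o)
    (c : G) (C K : ℝ)
    (hcords : ¬ IsOfFinOrder c)
    (hcC : StronglyContractingWith C (cOrbit c o))
    (hK : K > C) :
    ∀ p : ℕ, 1 ≤ p → ∀ g ∈ Gone c o K,
      (dist o (c ^ p • o) - 4 * K ≤
          dpi (g⁻¹ • Esub c o) {o} {(g⁻¹ * c ^ p * g) • o} ∧
        dpi (g⁻¹ • Esub c o) {o} {(g⁻¹ * c ^ p * g) • o} ≤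
          dist o (c ^ p • o) + 4 * K) ∧
      proj (g⁻¹ • Esub c o) o ⊆ Metric.closedBall (g⁻¹ • o) (2 * K) ∧
      proj (g⁻¹ • Esub c o) ((g⁻¹ * c ^ p * g) • o) ⊆
        Metric.closedBall ((g⁻¹ * c ^ p) • o) (2 * K) :=
  projection_distance_conjugate_general o hproper c K

end ACcogrowth
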